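/- Let $m:\{1,\dots,n+1\}\times\{1,\dots,n+1\}\to\mathbb{R}$ be a matrix such that for every transposition of adjacent-type the 'rectangle inequality' holds: for all $i<j$ and $k<l$, $m(i,k)+m(j,l) \geq m(i,l)+m(j,k)$. Then the map $\sigma\mapsto \sum_i m(i,\sigma(i))$ on $S_{n+1}$ is maximized by the identity permutation, and if at least two permutations attain the maximum, then some adjacent transposition $(i\; i{+}1)$ also attains it, so that $m(i,i)+m(i{+}1,i{+}1) = m(i,i{+}1)+m(i{+}1,i)$ for some $i\in\{1,\dots,n\}$. -/

import Mathlib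

/-!
By the rectangle inequality, undoing an adjacent descent of `σ` (passing to `σ ∘ (i i+1)`)
never decreases `∑ i, m i (σ i)`, while it strictly increases the score `∑ i, i * σ i`, the
same sum for the strict rectangle matrix `(i, j) ↦ i * j`. Among all maximizers, one of
maximal score has no descent, so it is the identity. Among the non-identity maximizers, one of
maximal score can only be undone into the identity, so it is an adjacent transposition.
-/

open Finset Equiv

section SwapSum

variable {ι R : Type*} [Fintype ι] [DecidableEq ι]

theorem sum_apply_mul_swap_add [AddCommGroup R] (m : ι → ι → R) (σ : Perm ι) {a b : ι}
    (hab : a ≠ b) :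
    ∑ x, m x ((σ * swap a b) x) + (m a (σ a) + m b (σ b)) =
      ∑ x, m x (σ x) + (m a (σ b) + m b (σ a)) := by
  have split (τ : Perm ι) :
      ∑ x, m x (τ x) = m a (τ a) + m b (τ b) + ∑ x ∈ (univ.erase a).erase b, m x (τ x) := by
    rw [← add_sum_erase univ _ (mem_univ a),
      ← add_sum_erase _ _ (mem_erase.2 ⟨hab.symm, mem_univ b⟩), add_assoc]
  have rest : ∑ x ∈ (univ.erase a).erase b, m x ((σ * swap a b) x) =
      ∑ x ∈ (univ.erase a).erase b, m x (σ x) := by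
    refine sum_congr rfl fun x hx => ?_
    obtain ⟨hxb, hxa, -⟩ := mem_erase.1 hx |>.imp_right mem_erase.1
    rw [Perm.mul_apply, swap_apply_of_ne_of_ne hxa hxb]
  rw [split (σ * swap a b), split σ, rest]
  simp only [Perm.mul_apply, swap_apply_left, swap_apply_right]
  abel

variable [LinearOrder ι] [AddCommGroup R] [PartialOrder R] [IsOrderedAddMonoid R]
  (m : ι → ι → R) {σ : Perm ι} {a b : ι}

theorem sum_apply_le_sum_apply_mul_swap
    (hm : ∀ i j k l, i < j → k < l → m i l + m j k ≤ m i k + m j l)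
    (hab : a < b) (hσ : σ b < σ a) :
    ∑ x, m x (σ x) ≤ ∑ x, m x ((σ * swap a b) x) := by
  refine le_of_add_le_add_right (a := m a (σ a) + m b (σ b)) ?_
  rw [sum_apply_mul_swap_add m σ hab.ne]
  exact add_le_add_right (hm a b (σ b) (σ a) hab hσ) _

theorem sum_apply_lt_sum_apply_mul_swap
    (hm : ∀ i j k l, i < j → k < l → m i l + m j k < m i k + m j l)
    (hab : a < b) (hσ : σ b < σ a) :
    ∑ x, m x (σ x) < ∑ x, m x ((σ * swap a b) x) := by
  refine lt_of_add_lt_add_right (a := m a (σ a) + m b (σ b)) ?_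
  rw [sum_apply_mul_swap_add m σ hab.ne]
  exact add_lt_add_right (hm a b (σ b) (σ a) hab hσ) _

end SwapSum

namespace Fin

theorem exists_succ_lt_castSucc_of_ne_one {n : ℕ} {σ : Perm (Fin (n + 1))} (hσ : σ ≠ 1) :
    ∃ i : Fin n, σ i.succ < σ i.castSucc := by
  by_contra! h
  have hmono : StrictMono σ := strictMono_iff_lt_succ.2 fun i =>
    (h i).lt_of_ne (σ.injective.ne castSucc_lt_succ.ne)
  exact hσ (Perm.ext (congrFun hmono.eq_id))

noncomputable def permScore {N : ℕ} (σ : Perm (Fin N)) : ℝ :=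
  ∑ i : Fin N, ((i : ℕ) : ℝ) * ((σ i : ℕ) : ℝ)

theorem permScore_lt_permScore_mul_swap {N : ℕ} {σ : Perm (Fin N)} {a b : Fin N}
    (hab : a < b) (hσ : σ b < σ a) : permScore σ < permScore (σ * swap a b) := by
  unfold permScore
  refine sum_apply_lt_sum_apply_mul_swap (fun i j : Fin N => ((i : ℕ) : ℝ) * ((j : ℕ) : ℝ))
    (fun i j k l hij hkl => ?_) hab hσ
  have hij : ((i : ℕ) : ℝ) < (j : ℕ) := by exact_mod_cast hij
  have hkl : ((k : ℕ) : ℝ) < (l : ℕ) := by exact_mod_cast hkl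
  nlinarith

theorem exists_mem_forall_mul_swap_notMem {N : ℕ} {S : Finset (Perm (Fin N))}
    (hS : S.Nonempty) :
    ∃ σ ∈ S, ∀ a b, a < b → σ b < σ a → σ * swap a b ∉ S := by
  obtain ⟨σ, hσS, hmax⟩ := S.exists_max_image permScore hS
  exact ⟨σ, hσS, fun a b hab hσ hmem =>
    (permScore_lt_permScore_mul_swap hab hσ).not_ge (hmax _ hmem)⟩

end Fin

section Assignment

variable {n : ℕ} (m : Fin (n + 1) → Fin (n + 1) → ℝ)

theorem sum_apply_le_sum_diag
    (hm : ∀ i j k l : Fin (n + 1), i < j → k < l → m i l + m j k ≤ m i k + m j l)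
    (τ : Perm (Fin (n + 1))) : ∑ i, m i (τ i) ≤ ∑ i, m i i := by
  set f : Perm (Fin (n + 1)) → ℝ := fun σ => ∑ i, m i (σ i)
  obtain ⟨σ₀, -, hσ₀⟩ := univ.exists_max_image f univ_nonempty
  obtain ⟨σ, hσS, hstuck⟩ :=
    Fin.exists_mem_forall_mul_swap_notMem (S := univ.filter fun σ => f σ₀ ≤ f σ) ⟨σ₀, by simp⟩
  rw [mem_filter] at hσS
  obtain rfl : σ = 1 := by
    by_contra hσ
    obtain ⟨i, hi⟩ := Fin.exists_succ_lt_castSucc_of_ne_one hσ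
    refine hstuck _ _ Fin.castSucc_lt_succ hi (mem_filter.2 ⟨mem_univ _, ?_⟩)
    exact hσS.2.trans (sum_apply_le_sum_apply_mul_swap m hm Fin.castSucc_lt_succ hi)
  exact (hσ₀ τ (mem_univ τ)).trans (by simpa [f] using hσS.2)

theorem exists_adjacent_eq_of_sum_apply_eq_sum_diag
    (hm : ∀ i j k l : Fin (n + 1), i < j → k < l → m i l + m j k ≤ m i k + m j l)
    (hτ : ∃ τ : Perm (Fin (n + 1)), τ ≠ 1 ∧ ∑ i, m i (τ i) = ∑ i, m i i) :
    ∃ i : Fin n, m i.castSucc i.castSucc + m i.succ i.succ =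
      m i.castSucc i.succ + m i.succ i.castSucc := by
  set f : Perm (Fin (n + 1)) → ℝ := fun σ => ∑ i, m i (σ i)
  obtain ⟨σ, hσS, hstuck⟩ :=
    Fin.exists_mem_forall_mul_swap_notMem (S := univ.filter fun σ => σ ≠ 1 ∧ f σ = f 1)
      (let ⟨τ, hτ⟩ := hτ; ⟨τ, mem_filter.2 ⟨mem_univ τ, hτ⟩⟩)
  simp only [mem_filter, mem_univ, true_and] at hσS hstuck
  obtain ⟨i, hi⟩ := Fin.exists_succ_lt_castSucc_of_ne_one hσS.1
  have hmax : f (σ * swap i.castSucc i.succ) = f 1 :=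
    le_antisymm (sum_apply_le_sum_diag m hm _)
      (hσS.2 ▸ sum_apply_le_sum_apply_mul_swap m hm Fin.castSucc_lt_succ hi)
  have hσ : σ = swap i.castSucc i.succ := by
    by_contra hne
    refine hstuck _ _ Fin.castSucc_lt_succ hi ⟨fun h => hne ?_, hmax⟩
    rw [mul_eq_one_iff_eq_inv.1 h, swap_inv]
  have hswap : ∑ x, m x (swap i.castSucc i.succ x) = ∑ x, m x x := hσ ▸ hσS.2
  have hsplit := sum_apply_mul_swap_add m 1 (Fin.castSucc_lt_succ (i := i)).ne
  simp only [one_mul, Perm.one_apply, hswap] at hsplit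
  exact ⟨i, add_left_cancel hsplit⟩

end Assignment

/-- If `m` satisfies the rectangle inequality, then the identity permutation maximizes
`σ ↦ ∑ i, m i (σ i)`, and if the maximum is attained by at least two permutations, then
some adjacent transposition also attains it, i.e. some rectangle inequality is equality. -/
theorem stmt2 {n : ℕ} (m : Fin (n + 1) → Fin (n + 1) → ℝ)
    (hrect : ∀ i j k l : Fin (n + 1), i < j → k < l → m i l + m j k ≤ m i k + m j l) :
    (∀ σ : Equiv.Perm (Fin (n + 1)), ∑ i, m i (σ i) ≤ ∑ i, m i i) ∧
    ((∃ σ : Equiv.Perm (Fin (n + 1)), σ ≠ 1 ∧ ∑ i, m i (σ i) = ∑ i, m i i) →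
      ∃ i : Fin n, m i.castSucc i.castSucc + m i.succ i.succ =
        m i.castSucc i.succ + m i.succ i.castSucc) :=
  ⟨sum_apply_le_sum_diag m hrect, exists_adjacent_eq_of_sum_apply_eq_sum_diag m hrect⟩
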